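/- For all real numbers c and d, it holds that c · exp(2cd) · Φ̄(c + d) ≤ c · Φ̄(d − c), where Φ̄(x) = ∫_x^∞ (2π)^{−1/2} exp(−y²/2) dy is the standard normal survival function. -/
import Mathlib


open MeasureTheory Set

noncomputable section

namespace GaussianEstimate

/-- The standard normal survival function `Φ̄(x) = ∫_x^∞ (2π)^{-1/2} exp(-y²/2) dy`. -/
def PhiBar (x : ℝ) : ℝ :=
  ∫ y in Set.Ioi x, Real.exp (-y ^ 2 / 2) / Real.sqrt (2 * Real.pi)

lemma phi_integrable : Integrable (fun y : ℝ => Real.exp (-y ^ 2 / 2) / Real.sqrt (2 * Real.pi)) := by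
  have h : Integrable (fun y : ℝ => Real.exp (-(1/2) * y ^ 2)) :=
    integrable_exp_neg_mul_sq (by norm_num)
  have := h.div_const (Real.sqrt (2 * Real.pi))
  convert this using 2 with y
  ring_nf

lemma exp_aux (c d x : ℝ) :
    Real.exp (2 * c * d) * (Real.exp (-(x + 2 * c) ^ 2 / 2) / Real.sqrt (2 * Real.pi)) =
      Real.exp (2 * c * (d - c - x)) * (Real.exp (-x ^ 2 / 2) / Real.sqrt (2 * Real.pi)) := by
  rw [mul_div_assoc', mul_div_assoc', ← Real.exp_add, ← Real.exp_add]
  congr 2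
  ring

lemma key_identity (c d : ℝ) :
    Real.exp (2 * c * d) * PhiBar (c + d) =
      ∫ x in Set.Ioi (d - c),
        Real.exp (2 * c * (d - c - x)) * (Real.exp (-x ^ 2 / 2) / Real.sqrt (2 * Real.pi)) := by
  have hmp : MeasurePreserving (fun x : ℝ => x + 2 * c) volume volume :=
    measurePreserving_add_right volume (2 * c)
  have hemb : MeasurableEmbedding (fun x : ℝ => x + 2 * c) :=
    (MeasurableEquiv.addRight (2 * c)).measurableEmbedding
  have hpre : (fun x : ℝ => x + 2 * c) ⁻¹' (Set.Ioi (c + d)) = Set.Ioi (d - c) := by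
    ext x; simp [Set.mem_Ioi]; constructor <;> intro h <;> linarith
  have hcv := hmp.setIntegral_preimage_emb hemb
    (fun y => Real.exp (-y ^ 2 / 2) / Real.sqrt (2 * Real.pi)) (Set.Ioi (c + d))
  rw [hpre] at hcv
  rw [PhiBar, ← hcv, ← integral_const_mul]
  exact integral_congr_ae (Filter.Eventually.of_forall fun x => exp_aux c d x)

lemma key_integrable (c d : ℝ) :
    Integrable (fun x : ℝ =>
      Real.exp (2 * c * (d - c - x)) * (Real.exp (-x ^ 2 / 2) / Real.sqrt (2 * Real.pi))) := by
  have h : Integrable (fun x : ℝ =>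
      Real.exp (2 * c * d) * (Real.exp (-(x + 2 * c) ^ 2 / 2) / Real.sqrt (2 * Real.pi))) := by
    have := (phi_integrable.comp_add_right (2 * c)).const_mul (Real.exp (2 * c * d))
    exact this
  convert h using 2 with x
  exact (exp_aux c d x).symm

/-- Key Gaussian estimate.
For all real `c` and `d`: `c · exp(2cd) · Φ̄(c + d) ≤ c · Φ̄(d - c)`. -/
theorem mul_exp_PhiBar_le (c d : ℝ) :
    c * Real.exp (2 * c * d) * PhiBar (c + d) ≤ c * PhiBar (d - c) := by
  rw [mul_assoc, key_identity c d]
  rcases le_or_gt 0 c with hc | hc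
  · apply mul_le_mul_of_nonneg_left _ hc
    rw [PhiBar]
    apply setIntegral_mono_on (key_integrable c d).integrableOn
      phi_integrable.integrableOn measurableSet_Ioi
    intro x hx
    rw [Set.mem_Ioi] at hx
    have h1 : Real.exp (2 * c * (d - c - x)) ≤ 1 := by
      rw [Real.exp_le_one_iff]
      have : d - c - x ≤ 0 := by linarith
      nlinarith
    have h2 : 0 ≤ Real.exp (-x ^ 2 / 2) / Real.sqrt (2 * Real.pi) := by positivity
    nlinarith [Real.exp_pos (2 * c * (d - c - x))]
  · apply mul_le_mul_of_nonpos_left _ hc.le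
    rw [PhiBar]
    apply setIntegral_mono_on phi_integrable.integrableOn
      (key_integrable c d).integrableOn measurableSet_Ioi
    intro x hx
    rw [Set.mem_Ioi] at hx
    have h1 : 1 ≤ Real.exp (2 * c * (d - c - x)) := by
      rw [Real.one_le_exp_iff]
      have : d - c - x ≤ 0 := by linarith
      nlinarith
    have h2 : 0 ≤ Real.exp (-x ^ 2 / 2) / Real.sqrt (2 * Real.pi) := by positivity
    nlinarith

end GaussianEstimate
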